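/- arXiv:2511.13691 — 2 statements merged into one kernel-verified Lean document; each statement's English description precedes it below -/
import Mathlib

section
/- For every integer n ≥ 4, the product of the first n primes exceeds the square of the (n+1)-th prime: p_1 · p_2 · ⋯ · p_n > p_{n+1}^2. -/
lemma nth_prime_two_eq_five : Nat.nth Nat.Prime 2 = 5 := by
  have : Nat.count Nat.Prime 5 = 2 := by decide
  have h := Nat.nth_count (p := Nat.Prime) (n := 5) (by norm_num)
  rwa [this] at h

lemma nth_prime_three_eq_seven : Nat.nth Nat.Prime 3 = 7 := by
  have : Nat.count Nat.Prime 7 = 3 := by decide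
  have h := Nat.nth_count (p := Nat.Prime) (n := 7) (by norm_num)
  rwa [this] at h

lemma nth_prime_four_eq_eleven : Nat.nth Nat.Prime 4 = 11 := by
  have : Nat.count Nat.Prime 11 = 4 := by decide
  have h := Nat.nth_count (p := Nat.Prime) (n := 11) (by norm_num)
  rwa [this] at h

lemma nth_prime_succ_le (n : ℕ) : Nat.nth Nat.Prime (n + 1) ≤ 2 * Nat.nth Nat.Prime n := by
  obtain ⟨p, hp, h1, h2⟩ := Nat.exists_prime_lt_and_le_two_mul (Nat.nth Nat.Prime n)
    (Nat.Prime.ne_zero (Nat.prime_nth_prime n))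
  refine le_trans ?_ h2
  by_contra h
  push_neg at h
  exact absurd (Nat.le_nth_of_lt_nth_succ h hp) (not_le.mpr h1)

lemma nth_prime_ge (n : ℕ) : n + 2 ≤ Nat.nth Nat.Prime n := Nat.add_two_le_nth_prime n

/-- Bonse's first inequality: for n ≥ 4, the product of the first n primes
exceeds the square of the (n+1)-th prime. Here `Nat.nth Nat.Prime i` is the
(i+1)-th prime (0-indexed), so `p_{k} = Nat.nth Nat.Prime (k-1)`. -/
theorem bonse_first (n : ℕ) (hn : 4 ≤ n) :
    (Nat.nth Nat.Prime n) ^ 2 < ∏ i ∈ Finset.range n, Nat.nth Nat.Prime i := by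
  induction n, hn using Nat.le_induction with
  | base =>
    rw [Finset.prod_range_succ, Finset.prod_range_succ, Finset.prod_range_succ,
      Finset.prod_range_succ, Finset.prod_range_zero, nth_prime_four_eq_eleven,
      Nat.nth_prime_zero_eq_two, Nat.nth_prime_one_eq_three, nth_prime_two_eq_five,
      nth_prime_three_eq_seven]
    norm_num
  | succ m hm ih =>
    rw [Finset.prod_range_succ]
    have h1 : Nat.nth Nat.Prime (m + 1) ≤ 2 * Nat.nth Nat.Prime m := nth_prime_succ_le m
    have h2 : 4 ≤ Nat.nth Nat.Prime m := le_trans (by omega) (nth_prime_ge m)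
    calc Nat.nth Nat.Prime (m + 1) ^ 2 ≤ (2 * Nat.nth Nat.Prime m) ^ 2 :=
          Nat.pow_le_pow_left h1 2
      _ = 4 * Nat.nth Nat.Prime m ^ 2 := by ring
      _ ≤ Nat.nth Nat.Prime m ^ 2 * Nat.nth Nat.Prime m := by
          rw [mul_comm]; exact Nat.mul_le_mul_left _ h2
      _ < (∏ i ∈ Finset.range m, Nat.nth Nat.Prime i) * Nat.nth Nat.Prime m :=
          (Nat.mul_lt_mul_right (Nat.Prime.pos (Nat.prime_nth_prime m))).mpr ih
end

section
/- Let C₁ = 8 and C₂ = 14, and fix x ∈ (−2, 2). If y* is a real number with y* ≥ e satisfying y* = (C₁ log y* + C₂)/(x+2), then y* < 2·((C₁+C₂)/(x+2))·log((C₁+C₂)/(x+2)), and consequently exp(y*) < ((C₁+C₂)/(x+2))^{2(C₁+C₂)/(x+2)}. -/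
/-- With `C₁ = 8`, `C₂ = 14` and `x ∈ (−2, 2)`, any solution `y* ≥ e` of the
fixed-point equation `y* = (C₁ log y* + C₂)/(x+2)` satisfies
`y* < 2·(22/(x+2))·log(22/(x+2))`, and consequently
`exp y* < (22/(x+2))^{2·22/(x+2)}`. -/
theorem fixed_point_bound (x ystar : ℝ) (hx : x ∈ Set.Ioo (-2 : ℝ) 2)
    (hy : Real.exp 1 ≤ ystar)
    (hfix : ystar = (8 * Real.log ystar + 14) / (x + 2)) :
    ystar < 2 * ((8 + 14) / (x + 2)) * Real.log ((8 + 14) / (x + 2)) ∧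
      Real.exp ystar <
        ((8 + 14) / (x + 2)) ^ (2 * (8 + 14) / (x + 2) : ℝ) := by
  obtain ⟨hx1, hx2⟩ := hx
  have hx0 : 0 < x + 2 := by linarith
  set A : ℝ := (8 + 14) / (x + 2) with hA
  have hA0 : 0 < A := by positivity
  have hy0 : 0 < ystar := lt_of_lt_of_le (Real.exp_pos 1) hy
  have hlog1 : 1 ≤ Real.log ystar := by
    have := Real.log_le_log (Real.exp_pos 1) hy
    simpa using this
  -- y* ≤ A log y*
  have h1 : ystar ≤ A * Real.log ystar := by
    rw [hA]
    nth_rewrite 1 [hfix]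
    rw [div_mul_eq_mul_div]
    gcongr (?_ : ℝ) / _
    nlinarith
  -- log y* ≤ y*/(2A) + log (2A) - 1
  have h2 : Real.log ystar ≤ ystar / (2 * A) + Real.log (2 * A) - 1 := by
    have hpos : 0 < ystar / (2 * A) := by positivity
    have := Real.log_le_sub_one_of_pos hpos
    rw [Real.log_div (ne_of_gt hy0) (by positivity)] at this
    linarith
  have hlog2A : Real.log (2 * A) = Real.log 2 + Real.log A :=
    Real.log_mul (by norm_num) (ne_of_gt hA0)
  have hlog2 : Real.log 2 < 1 := by
    have := Real.log_two_lt_d9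
    linarith
  have key : ystar < 2 * A * Real.log A := by
    have h3 : ystar ≤ A * (ystar / (2 * A) + Real.log (2 * A) - 1) := by
      have := mul_le_mul_of_nonneg_left h2 (le_of_lt hA0)
      linarith [h1]
    have h4 : A * (ystar / (2 * A)) = ystar / 2 := by
      field_simp
    rw [hlog2A] at h3
    nlinarith [h4]
  refine ⟨by linarith [key], ?_⟩
  have hexp : (2 * (8 + 14) / (x + 2) : ℝ) = 2 * A := by
    rw [hA]; ring
  rw [hexp, Real.rpow_def_of_pos hA0]
  exact Real.exp_lt_exp.mpr (by linarith [key])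
end
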